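/- arXiv:2301.13069 — 6 statements merged into one kernel-verified Lean document; each statement's English description precedes it below -/
import Mathlib

section
/- Let B_1, B_2, B_3, B_4 be k×k complex matrices. Then ‖[B_1,B_2] + [B_3,B_4]†‖_F² + ‖[B_1,B_3] - [B_2,B_4]†‖_F² + ‖[B_1,B_4] + [B_2,B_3]†‖_F² = Σ_{1≤a<b≤4} ‖[B_a,B_b]‖_F², where ‖X‖_F² = Tr(X†X) is the squared Frobenius norm and X† is the conjugate transpose. -/
open Matrix

/-- The commutator `[X,Y] = XY - YX` of complex matrices. -/
noncomputable def matComm {k : ℕ} (X Y : Matrix (Fin k) (Fin k) ℂ) : Matrix (Fin k) (Fin k) ℂ :=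
  X * Y - Y * X

/-- The squared Frobenius norm `‖X‖_F² = Tr(X†X)`. -/
noncomputable def frobSq {k : ℕ} (X : Matrix (Fin k) (Fin k) ℂ) : ℂ :=
  Matrix.trace (Xᴴ * X)

/-- Cyclicity of the trace for a product of four matrices (rotation by one). -/
private lemma r1 {k : ℕ} (X Y Z W : Matrix (Fin k) (Fin k) ℂ) :
    Matrix.trace ((X*Y)*(Z*W)) = Matrix.trace ((W*X)*(Y*Z)) := by
  rw [← mul_assoc, trace_mul_comm, ← mul_assoc, ← mul_assoc, mul_assoc (W*X)]

/-- The Jacobi-type cancellation of the cross terms. -/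
private lemma key {k : ℕ} (B₁ B₂ B₃ B₄ : Matrix (Fin k) (Fin k) ℂ) :
    Matrix.trace (matComm B₃ B₄ * matComm B₁ B₂)
      - Matrix.trace (matComm B₂ B₄ * matComm B₁ B₃)
      + Matrix.trace (matComm B₂ B₃ * matComm B₁ B₄) = 0 := by
  simp only [matComm, sub_mul, mul_sub, trace_sub]
  linear_combination r1 B₃ B₄ B₁ B₂ + r1 B₄ B₂ B₁ B₃ - r1 B₄ B₃ B₁ B₂
    - r1 B₃ B₂ B₁ B₄ - r1 B₂ B₄ B₁ B₃ + r1 B₂ B₃ B₁ B₄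

/-- The conjugate of the previous cancellation. -/
private lemma key' {k : ℕ} (B₁ B₂ B₃ B₄ : Matrix (Fin k) (Fin k) ℂ) :
    Matrix.trace ((matComm B₁ B₂)ᴴ * (matComm B₃ B₄)ᴴ)
      - Matrix.trace ((matComm B₁ B₃)ᴴ * (matComm B₂ B₄)ᴴ)
      + Matrix.trace ((matComm B₁ B₄)ᴴ * (matComm B₂ B₃)ᴴ) = 0 := by
  have h : ∀ X Y : Matrix (Fin k) (Fin k) ℂ,
      Matrix.trace (Xᴴ * Yᴴ) = star (Matrix.trace (Y * X)) := by
    intro X Y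
    rw [← conjTranspose_mul, trace_conjTranspose]
  rw [h, h, h, ← star_sub, ← star_add, key B₁ B₂ B₃ B₄, star_zero]

/-- Expansion of `‖X + Y†‖_F²`. -/
private lemma fa {k : ℕ} (X Y : Matrix (Fin k) (Fin k) ℂ) :
    frobSq (X + Yᴴ) = frobSq X + frobSq Y
      + (Matrix.trace (Xᴴ * Yᴴ) + Matrix.trace (Y * X)) := by
  simp only [frobSq, conjTranspose_add, conjTranspose_conjTranspose, add_mul, mul_add,
    trace_add, trace_mul_comm Y Yᴴ]
  ring

/-- Expansion of `‖X - Y†‖_F²`. -/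
private lemma fs {k : ℕ} (X Y : Matrix (Fin k) (Fin k) ℂ) :
    frobSq (X - Yᴴ) = frobSq X + frobSq Y
      - (Matrix.trace (Xᴴ * Yᴴ) + Matrix.trace (Y * X)) := by
  simp only [frobSq, conjTranspose_sub, conjTranspose_conjTranspose, sub_mul, mul_sub,
    trace_sub, trace_mul_comm Y Yᴴ]
  ring

/-- For `k×k` complex matrices `B₁, B₂, B₃, B₄`:
`‖[B₁,B₂]+[B₃,B₄]†‖_F² + ‖[B₁,B₃]-[B₂,B₄]†‖_F² + ‖[B₁,B₄]+[B₂,B₃]†‖_F²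
  = Σ_{1≤a<b≤4} ‖[B_a,B_b]‖_F²`. -/
theorem frobSq_moment_map_identity {k : ℕ} (B₁ B₂ B₃ B₄ : Matrix (Fin k) (Fin k) ℂ) :
    frobSq (matComm B₁ B₂ + (matComm B₃ B₄)ᴴ)
      + frobSq (matComm B₁ B₃ - (matComm B₂ B₄)ᴴ)
      + frobSq (matComm B₁ B₄ + (matComm B₂ B₃)ᴴ)
    = frobSq (matComm B₁ B₂) + frobSq (matComm B₁ B₃) + frobSq (matComm B₁ B₄)
      + frobSq (matComm B₂ B₃) + frobSq (matComm B₂ B₄) + frobSq (matComm B₃ B₄) := by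
  rw [fa, fs, fa]
  linear_combination key B₁ B₂ B₃ B₄ + key' B₁ B₂ B₃ B₄
end

section
/- Let B_1, B_2, B_3, B_4 be k×k complex matrices. Then the three equations [B_1,B_2] + [B_3,B_4]† = 0, [B_1,B_3] - [B_2,B_4]† = 0, and [B_1,B_4] + [B_2,B_3]† = 0 hold simultaneously if and only if [B_a,B_b] = 0 for all 1 ≤ a < b ≤ 4. -/
open Matrix

/-- Frobenius norm facts: `trace (Aᴴ * A)` is a nonnegative real, zero iff `A = 0`. -/
private lemma frob {k : ℕ} (A : Matrix (Fin k) (Fin k) ℂ) :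
    ∃ r : ℝ, 0 ≤ r ∧ trace (Aᴴ * A) = (r : ℂ) ∧ (r = 0 → A = 0) := by
  refine ⟨∑ j, ∑ i, Complex.normSq (A i j),
    Finset.sum_nonneg fun j _ => Finset.sum_nonneg fun i _ => Complex.normSq_nonneg _, ?_, ?_⟩
  · simp only [trace, diag, Matrix.mul_apply, conjTranspose_apply]
    push_cast
    congr 1
    ext j
    congr 1
    ext i
    rw [Complex.normSq_eq_conj_mul_self, Complex.star_def]
  · intro hr
    have := (Finset.sum_eq_zero_iff_of_nonneg (fun j _ => Finset.sum_nonneg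
      (fun i _ => Complex.normSq_nonneg (A i j)))).mp hr
    ext i j
    have hj := this j (Finset.mem_univ j)
    have := (Finset.sum_eq_zero_iff_of_nonneg
      (fun i _ => Complex.normSq_nonneg (A i j))).mp hj i (Finset.mem_univ i)
    simpa using Complex.normSq_eq_zero.mp this

/-- Cyclic invariance of the trace for quadruple products. -/
private lemma cyc4 {k : ℕ} (A B C D : Matrix (Fin k) (Fin k) ℂ) :
    trace (A * B * C * D) = trace (D * A * B * C) := by
  rw [trace_mul_comm (A * B * C) D, ← mul_assoc, ← mul_assoc]

/-- For `k×k` complex matrices `B₁,...,B₄`, the complex ADHM moment map equations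
`[B₁,B₂]+[B₃,B₄]† = 0`, `[B₁,B₃]-[B₂,B₄]† = 0`, `[B₁,B₄]+[B₂,B₃]† = 0` hold
simultaneously if and only if `[B_a,B_b] = 0` for all `1 ≤ a < b ≤ 4`. -/
theorem complex_moment_maps_iff_commute {k : ℕ} (B₁ B₂ B₃ B₄ : Matrix (Fin k) (Fin k) ℂ) :
    (matComm B₁ B₂ + (matComm B₃ B₄)ᴴ = 0
        ∧ matComm B₁ B₃ - (matComm B₂ B₄)ᴴ = 0
        ∧ matComm B₁ B₄ + (matComm B₂ B₃)ᴴ = 0)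
      ↔ (matComm B₁ B₂ = 0 ∧ matComm B₁ B₃ = 0 ∧ matComm B₁ B₄ = 0
        ∧ matComm B₂ B₃ = 0 ∧ matComm B₂ B₄ = 0 ∧ matComm B₃ B₄ = 0) := by
  constructor
  · rintro ⟨h1, h2, h3⟩
    set C1 := matComm B₁ B₂ with hC1
    set C2 := matComm B₁ B₃ with hC2
    set C3 := matComm B₁ B₄ with hC3
    set D1 := matComm B₃ B₄ with hD1
    set D2 := matComm B₂ B₄ with hD2
    set D3 := matComm B₂ B₃ with hD3
    -- the trace identity `tr(C₁D₁) - tr(C₂D₂) + tr(C₃D₃) = 0`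
    have e : trace (C1 * D1) - trace (C2 * D2) + trace (C3 * D3) = 0 := by
      simp only [hC1, hC2, hC3, hD1, hD2, hD3, matComm, sub_mul, mul_sub, trace_sub,
        ← mul_assoc]
      rw [cyc4 B₁ B₂ B₃ B₄, cyc4 B₁ B₂ B₄ B₃, cyc4 B₁ B₃ B₄ B₂, cyc4 B₁ B₄ B₃ B₂,
        cyc4 B₁ B₃ B₂ B₄, cyc4 B₁ B₄ B₂ B₃]
      ring
    have hC1H : C1ᴴ = -D1 := by
      have : D1ᴴ = -C1 := by linear_combination (norm := abel) h1
      calc C1ᴴ = (-(D1ᴴ))ᴴ := by rw [this]; simp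
        _ = -D1 := by simp
    have hC2H : C2ᴴ = D2 := by
      have : D2ᴴ = C2 := by linear_combination (norm := abel) -h2
      calc C2ᴴ = (D2ᴴ)ᴴ := by rw [this]
        _ = D2 := by simp
    have hC3H : C3ᴴ = -D3 := by
      have : D3ᴴ = -C3 := by linear_combination (norm := abel) h3
      calc C3ᴴ = (-(D3ᴴ))ᴴ := by rw [this]; simp
        _ = -D3 := by simp
    have S : trace (C1ᴴ * C1) + trace (C2ᴴ * C2) + trace (C3ᴴ * C3) = 0 := by
      rw [hC1H, hC2H, hC3H]
      simp only [neg_mul, trace_neg]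
      rw [trace_mul_comm D1 C1, trace_mul_comm D2 C2, trace_mul_comm D3 C3]
      linear_combination -e
    obtain ⟨r1, hr1, e1, z1⟩ := frob C1
    obtain ⟨r2, hr2, e2, z2⟩ := frob C2
    obtain ⟨r3, hr3, e3, z3⟩ := frob C3
    rw [e1, e2, e3] at S
    have hr : r1 + r2 + r3 = 0 := by exact_mod_cast S
    have hC1z : C1 = 0 := z1 (by linarith)
    have hC2z : C2 = 0 := z2 (by linarith)
    have hC3z : C3 = 0 := z3 (by linarith)
    refine ⟨hC1z, hC2z, hC3z, ?_, ?_, ?_⟩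
    · have : D3ᴴ = 0 := by rw [hC3z] at h3; simpa using h3
      simpa using congrArg conjTranspose this
    · have : D2ᴴ = 0 := by rw [hC2z] at h2; simpa using h2
      simpa using congrArg conjTranspose this
    · have : D1ᴴ = 0 := by rw [hC1z] at h1; simpa using h1
      simpa using congrArg conjTranspose this
  · rintro ⟨h12, h13, h14, h23, h24, h34⟩
    simp [h12, h13, h14, h23, h24, h34]
end

section
/- Let V be a finite-dimensional complex inner product space, B_1,...,B_4 ∈ End(V), W a complex inner product space, I : W → V linear, and ζ > 0 a real number such that Σ_{a=1}^4 [B_a, B_a†] + I I† = ζ·id_V. If S ⊆ V is a linear subspace with B_a(S) ⊆ S for all a = 1,...,4 and range(I) ⊆ S, then S = V. -/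
open LinearMap

open scoped InnerProductSpace ComplexConjugate in
/-- Stability for the ADHM data: if `Σ_a [B_a, B_a†] + I I† = ζ·id_V` with `ζ > 0`, then any
subspace `S ⊆ V` invariant under all `B_a` and containing the range of `I` is all of `V`. -/
theorem adhm_stability {V W : Type*}
    [NormedAddCommGroup V] [InnerProductSpace ℂ V] [FiniteDimensional ℂ V]
    [NormedAddCommGroup W] [InnerProductSpace ℂ W] [FiniteDimensional ℂ W]
    (B : Fin 4 → V →ₗ[ℂ] V) (I : W →ₗ[ℂ] V) (ζ : ℝ) (hζ : 0 < ζ)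
    (h : (∑ a : Fin 4, (B a ∘ₗ LinearMap.adjoint (B a) - LinearMap.adjoint (B a) ∘ₗ B a))
          + I ∘ₗ LinearMap.adjoint I = (ζ : ℂ) • LinearMap.id)
    (S : Submodule ℂ V)
    (hB : ∀ a : Fin 4, ∀ x ∈ S, B a x ∈ S)
    (hI : LinearMap.range I ≤ S) :
    S = ⊤ := by
  rw [← Submodule.orthogonal_eq_bot_iff]
  by_contra hbot
  set K := Sᗮ with hKdef
  have hdim : 0 < Module.finrank ℂ K := by
    rw [Module.finrank_pos_iff]
    exact Submodule.nontrivial_iff_ne_bot.2 hbot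
  set n := Module.finrank ℂ K with hn
  let b := stdOrthonormalBasis ℂ K
  let e : Fin n → V := fun i => (b i : V)
  have heK : ∀ i, e i ∈ K := fun i => (b i).2
  have he : Orthonormal ℂ e := by
    rw [orthonormal_iff_ite]
    intro i j
    have := orthonormal_iff_ite.1 b.orthonormal i j
    rwa [Submodule.coe_inner] at this
  -- vectors of `K` are killed by `adjoint I`
  have hIadj : ∀ x ∈ K, adjoint I x = 0 := by
    intro x hx
    refine ext_inner_left ℂ fun v => ?_
    rw [adjoint_inner_right, inner_zero_right]
    exact (Submodule.mem_orthogonal S x).1 hx _ (hI ⟨v, rfl⟩)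
  -- `K` is invariant under the adjoints
  have hadj : ∀ (a : Fin 4), ∀ x ∈ K, adjoint (B a) x ∈ K := by
    intro a x hx
    rw [Submodule.mem_orthogonal]
    intro u hu
    rw [adjoint_inner_right]
    exact (Submodule.mem_orthogonal S x).1 hx _ (hB a u hu)
  -- Parseval in `K`
  have parseval : ∀ y : V, y ∈ K → (‖y‖ : ℝ) ^ 2 = ∑ j, ‖⟪e j, y⟫_ℂ‖ ^ 2 := by
    intro y hy
    have h1 := b.sum_inner_mul_inner (⟨y, hy⟩ : K) ⟨y, hy⟩
    have h2 : ∀ j : Fin n, ⟪(⟨y, hy⟩ : K), b j⟫_ℂ * ⟪b j, (⟨y, hy⟩ : K)⟫_ℂ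
        = ((‖⟪e j, y⟫_ℂ‖ : ℝ) : ℂ) ^ 2 := by
      intro j
      rw [← inner_conj_symm (⟨y, hy⟩ : K) (b j), RCLike.conj_mul, Submodule.coe_inner]
      rfl
    rw [Finset.sum_congr rfl fun j _ => h2 j, inner_self_eq_norm_sq_to_K] at h1
    have : ((∑ j, ‖⟪e j, y⟫_ℂ‖ ^ 2 : ℝ) : ℂ) = ((‖y‖ ^ 2 : ℝ) : ℂ) := by
      push_cast
      rw [h1]
      norm_num
    exact (Complex.ofReal_inj.1 this).symm
  -- pointwise identity from the moment map equation
  have key : ∀ i : Fin n,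
      ζ = ∑ a : Fin 4, (‖adjoint (B a) (e i)‖ ^ 2 - ‖B a (e i)‖ ^ 2) := by
    intro i
    have h0 := LinearMap.ext_iff.1 h (e i)
    have h1 := congrArg (fun z => ⟪e i, z⟫_ℂ) h0
    simp only [LinearMap.add_apply, LinearMap.sum_apply, LinearMap.sub_apply,
      LinearMap.comp_apply, LinearMap.smul_apply, LinearMap.id_apply,
      hIadj (e i) (heK i), map_zero, add_zero] at h1
    rw [inner_smul_right] at h1
    have hnorm : ⟪e i, e i⟫_ℂ = 1 := orthonormal_iff_ite.1 he i i |>.trans (by simp)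
    rw [hnorm, mul_one] at h1
    have h2 : ∀ a : Fin 4,
        ⟪e i, B a (adjoint (B a) (e i)) - adjoint (B a) (B a (e i))⟫_ℂ
          = ((‖adjoint (B a) (e i)‖ ^ 2 - ‖B a (e i)‖ ^ 2 : ℝ) : ℂ) := by
      intro a
      rw [inner_sub_right,
        ← adjoint_inner_left (B a) (LinearMap.adjoint (B a) (e i)) (e i),
        adjoint_inner_right (B a) (e i) (B a (e i)),
        inner_self_eq_norm_sq_to_K, inner_self_eq_norm_sq_to_K]
      push_cast
      rfl
    rw [inner_sum, Finset.sum_congr rfl fun a _ => h2 a, ← Complex.ofReal_sum] at h1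
    exact_mod_cast h1.symm
  -- the trace inequality
  have ineq : ∀ a : Fin 4,
      ∑ i, ‖adjoint (B a) (e i)‖ ^ 2 ≤ ∑ i, ‖B a (e i)‖ ^ 2 := by
    intro a
    calc ∑ i, ‖adjoint (B a) (e i)‖ ^ 2
        = ∑ i, ∑ j, ‖⟪e j, adjoint (B a) (e i)⟫_ℂ‖ ^ 2 :=
          Finset.sum_congr rfl fun i _ => parseval _ (hadj a (e i) (heK i))
      _ = ∑ j, ∑ i, ‖⟪e i, B a (e j)⟫_ℂ‖ ^ 2 := by
          rw [Finset.sum_comm]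
          refine Finset.sum_congr rfl fun j _ => Finset.sum_congr rfl fun i _ => ?_
          rw [adjoint_inner_right, norm_inner_symm]
      _ ≤ ∑ j, ‖B a (e j)‖ ^ 2 :=
          Finset.sum_le_sum fun j _ => he.sum_inner_products_le (B a (e j))
  -- combine
  have hsum : ζ * n = ∑ a : Fin 4, ∑ i, (‖adjoint (B a) (e i)‖ ^ 2 - ‖B a (e i)‖ ^ 2) := by
    rw [Finset.sum_comm]
    have : ∀ i : Fin n, ∑ a : Fin 4, (‖adjoint (B a) (e i)‖ ^ 2 - ‖B a (e i)‖ ^ 2) = ζ :=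
      fun i => (key i).symm
    rw [Finset.sum_congr rfl fun i _ => this i, Finset.sum_const, Finset.card_univ,
      Fintype.card_fin, nsmul_eq_mul, mul_comm]
  have hle : ζ * n ≤ 0 := by
    rw [hsum]
    refine Finset.sum_nonpos fun a _ => ?_
    rw [Finset.sum_sub_distrib]
    exact sub_nonpos.2 (ineq a)
  have hpos : (0 : ℝ) < ζ * n := by positivity
  linarith
end

section
/- Let k be a field, m ≥ 2, and x_1,...,x_m ∈ k. Then Σ_{t=1}^m (-1)^t ∏_{1≤j<n≤m, j≠t, n≠t} (x_j - x_n) = 0. -/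
open Finset

lemma avs_pair_prod {M : Type*} [CommMonoid M] {n : ℕ} (f : Fin n → Fin n → M) :
    ∏ p ∈ Finset.univ.filter (fun p : Fin n × Fin n => p.1 < p.2), f p.1 p.2
      = ∏ i : Fin n, ∏ j ∈ Finset.Ioi i, f i j := by
  rw [Finset.prod_filter, ← Finset.univ_product_univ, Finset.prod_product]
  refine Finset.prod_congr rfl fun i _ => ?_
  rw [← Finset.prod_filter]
  congr 1
  ext j
  simp [Finset.mem_Ioi]

lemma avs_succAbove_prod {M : Type*} [CommMonoid M] {n : ℕ} (t : Fin (n + 1))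
    (f : Fin (n + 1) → Fin (n + 1) → M) :
    ∏ p ∈ Finset.univ.filter
        (fun p : Fin (n + 1) × Fin (n + 1) => p.1 < p.2 ∧ p.1 ≠ t ∧ p.2 ≠ t),
      f p.1 p.2
      = ∏ p ∈ Finset.univ.filter (fun p : Fin n × Fin n => p.1 < p.2),
          f (t.succAbove p.1) (t.succAbove p.2) := by
  refine (Finset.prod_bij (fun p _ => (t.succAbove p.1, t.succAbove p.2)) ?_ ?_ ?_ ?_).symm
  · intro p hp
    simp only [Finset.mem_filter, Finset.mem_univ, true_and] at hp ⊢
    exact ⟨Fin.succAbove_lt_succAbove_iff.2 hp, t.succAbove_ne p.1, t.succAbove_ne p.2⟩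
  · intro p hp q hq h
    simp only [Prod.mk.injEq] at h
    exact Prod.ext (Fin.succAbove_right_injective h.1) (Fin.succAbove_right_injective h.2)
  · intro p hp
    simp only [Finset.mem_filter, Finset.mem_univ, true_and] at hp
    obtain ⟨a, ha⟩ := Fin.exists_succAbove_eq hp.2.1
    obtain ⟨b, hb⟩ := Fin.exists_succAbove_eq hp.2.2
    refine ⟨(a, b), ?_, by simp [ha, hb]⟩
    simp only [Finset.mem_filter, Finset.mem_univ, true_and]
    exact Fin.succAbove_lt_succAbove_iff.1 (by rw [ha, hb]; exact hp.1)
  · intro p hp; rfl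

/-- For `m ≥ 2` and `x₁,...,x_m` in a field:
`Σ_{t=1}^m (-1)^t ∏_{1≤j<n≤m, j≠t, n≠t} (x_j - x_n) = 0`. -/
theorem alternating_vandermonde_sum {K : Type*} [Field K] {m : ℕ} (hm : 2 ≤ m)
    (x : Fin m → K) :
    ∑ t : Fin m, (-1 : K) ^ ((t : ℕ) + 1) *
      ∏ p ∈ Finset.univ.filter
          (fun p : Fin m × Fin m => p.1 < p.2 ∧ p.1 ≠ t ∧ p.2 ≠ t),
        (x p.1 - x p.2) = 0 := by
  obtain ⟨n, rfl⟩ : ∃ n, m = n + 2 := ⟨m - 2, by omega⟩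
  -- the auxiliary matrix with two equal columns
  set A : Matrix (Fin (n + 2)) (Fin (n + 2)) K :=
    Matrix.of fun i j => if j = 0 then 1 else x i ^ ((j : ℕ) - 1) with hA
  have hdet : A.det = 0 := by
    refine Matrix.det_zero_of_column_eq (i := 0) (j := 1) (by simp) fun k => ?_
    simp [hA]
  have hsub : ∀ t : Fin (n + 2),
      A.submatrix t.succAbove Fin.succ = Matrix.vandermonde (x ∘ t.succAbove) := by
    intro t
    ext i j
    simp [hA, Matrix.vandermonde, Fin.succ_ne_zero]
  have hexp : ∑ t : Fin (n + 2), (-1 : K) ^ (t : ℕ) *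
      ∏ i : Fin (n + 1), ∏ j ∈ Finset.Ioi i,
        (x (t.succAbove j) - x (t.succAbove i)) = 0 := by
    have := Matrix.det_succ_column_zero A
    rw [hdet] at this
    rw [← this.symm]
    refine Finset.sum_congr rfl fun t _ => ?_
    rw [hsub t, Matrix.det_vandermonde]
    simp [hA]
  -- rewrite each summand
  have key : ∀ t : Fin (n + 2),
      ∏ p ∈ Finset.univ.filter
          (fun p : Fin (n + 2) × Fin (n + 2) => p.1 < p.2 ∧ p.1 ≠ t ∧ p.2 ≠ t),
        (x p.1 - x p.2)
      = (-1 : K) ^ (∑ i : Fin (n + 1), (Finset.Ioi i).card) *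
        ∏ i : Fin (n + 1), ∏ j ∈ Finset.Ioi i,
          (x (t.succAbove j) - x (t.succAbove i)) := by
    intro t
    rw [avs_succAbove_prod t (fun a b => x a - x b),
      avs_pair_prod (fun a b => x (t.succAbove a) - x (t.succAbove b))]
    rw [show ∏ i : Fin (n + 1), ∏ j ∈ Finset.Ioi i,
        (x (t.succAbove i) - x (t.succAbove j))
        = ∏ i : Fin (n + 1), ((-1 : K) ^ (Finset.Ioi i).card *
            ∏ j ∈ Finset.Ioi i, (x (t.succAbove j) - x (t.succAbove i))) from
      Finset.prod_congr rfl fun i _ => by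
        rw [← Finset.prod_const, ← Finset.prod_mul_distrib]
        exact Finset.prod_congr rfl fun j _ => by ring]
    rw [Finset.prod_mul_distrib, Finset.prod_pow_eq_pow_sum]
  simp only [key]
  rw [← mul_zero ((-1 : K) ^ (∑ i : Fin (n + 1), (Finset.Ioi i).card) * -1), ← hexp,
    Finset.mul_sum]
  exact Finset.sum_congr rfl fun t _ => by ring
end

section
/- Let G be a finite abelian group, Ĝ its character group, and suppose V = ⊕_{s∈Ĝ} V_s and W = ⊕_{s∈Ĝ} W_s are Ĝ-graded finite-dimensional complex inner product spaces (orthogonal decompositions). Let s_1,...,s_4 ∈ Ĝ, let B_a = (B_a^s)_{s} with B_a^s : V_s → V_{s+s_a}, and I = (I^s)_s with I^s : W_s → V_s, and suppose for every s ∈ Ĝ that Σ_{a=1}^4 ( B_a^{s-s_a} (B_a^{s-s_a})† - (B_a^s)† B_a^s ) + I^s (I^s)† = ζ_s · id_{V_s} with ζ_s > 0. If S = ⊕_s S_s with S_s ⊆ V_s satisfies B_a^s(S_s) ⊆ S_{s+s_a} for all a, s and range(I^s) ⊆ S_s for all s, then S_s = V_s for every s. -/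
open Function LinearMap Module Module.End RCLike
open scoped InnerProductSpace

/-!
The moment-map equations say that `μ := ∑ₐ [Bₐ, Bₐ†] + I I†` acts on each `V_s` as the scalar
`ζ_s > 0`; as the `V_s` are orthogonal and span `V`, `μ` is positive definite. Let `K` be the
orthogonal complement of `S := ⨆ S_s`. As `S` is `B`-invariant and contains the range of `I`, `K` is
`B†`-invariant and killed by `I†`. If `βₐ` is the restriction of `Bₐ†` to `K`, its adjoint in `K`
is the compression of `Bₐ`, so `re ⟪y, μ y⟫ ≤ ∑ₐ (‖βₐ y‖² - ‖βₐ† y‖²)` for `y ∈ K`. Summed over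
an orthonormal basis of `K` the right side is `∑ₐ tr [βₐ†, βₐ] = 0`, while the left side is
positive unless `K = 0`. Hence `S = V`, and orthogonality of the grading gives `S_s = V_s`.
-/

section

variable {𝕜 E F : Type*} [RCLike 𝕜]
  [NormedAddCommGroup E] [InnerProductSpace 𝕜 E] [FiniteDimensional 𝕜 E]
  [NormedAddCommGroup F] [InnerProductSpace 𝕜 F] [FiniteDimensional 𝕜 F]

lemma sum_norm_sq_adjoint_apply {κ : Type*} [Fintype κ] (b : OrthonormalBasis κ 𝕜 E)
    (T : E →ₗ[𝕜] E) : ∑ i, ‖adjoint T (b i)‖ ^ 2 = ∑ i, ‖T (b i)‖ ^ 2 := by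
  have key (S : E →ₗ[𝕜] E) : ∑ i, ‖S (b i)‖ ^ 2 = re (trace 𝕜 E (adjoint S ∘ₗ S)) := by
    simp only [trace_eq_sum_inner _ b, LinearMap.comp_apply, adjoint_inner_right, map_sum,
      inner_self_eq_norm_sq]
  rw [key, key, adjoint_adjoint, trace_comp_comm']

lemma norm_adjoint_restrict_adjoint_le (T : E →ₗ[𝕜] E) {K : Submodule 𝕜 E}
    (hK : ∀ x ∈ K, adjoint T x ∈ K) (y : K) :
    ‖adjoint ((adjoint T).restrict hK) y‖ ≤ ‖T y‖ := by
  set z := adjoint ((adjoint T).restrict hK) y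
  have h : ‖z‖ ^ 2 ≤ ‖T y‖ * ‖z‖ := calc
    ‖z‖ ^ 2 = re ⟪T y, (z : E)⟫_𝕜 := by
      rw [← inner_self_eq_norm_sq (𝕜 := 𝕜), adjoint_inner_left, Submodule.coe_inner,
        coe_restrict_apply, adjoint_inner_right]
    _ ≤ ‖T y‖ * ‖z‖ := re_inner_le_norm _ _
  nlinarith [norm_nonneg z, norm_nonneg (T y)]

variable {ι : Type*} [Fintype ι]

noncomputable def realMomentMap (B : ι → E →ₗ[𝕜] E) (I : F →ₗ[𝕜] E) : E →ₗ[𝕜] E :=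
  ∑ a, (B a ∘ₗ adjoint (B a) - adjoint (B a) ∘ₗ B a) + I ∘ₗ adjoint I

lemma re_inner_apply_adjoint_apply {G : Type*} [NormedAddCommGroup G] [InnerProductSpace 𝕜 G]
    [FiniteDimensional 𝕜 G] (A : G →ₗ[𝕜] E) (y : E) :
    re ⟪y, A (adjoint A y)⟫_𝕜 = ‖adjoint A y‖ ^ 2 := by
  rw [← adjoint_inner_left, inner_self_eq_norm_sq]

lemma re_inner_realMomentMap (B : ι → E →ₗ[𝕜] E) (I : F →ₗ[𝕜] E) (y : E) :
    re ⟪y, realMomentMap B I y⟫_𝕜 =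
      ∑ a, (‖adjoint (B a) y‖ ^ 2 - ‖B a y‖ ^ 2) + ‖adjoint I y‖ ^ 2 := by
  simp only [realMomentMap, LinearMap.add_apply, LinearMap.sum_apply, LinearMap.sub_apply,
    LinearMap.comp_apply, inner_add_right, inner_sum, inner_sub_right, map_add, map_sum, map_sub,
    re_inner_apply_adjoint_apply, adjoint_inner_right, inner_self_eq_norm_sq]

theorem eq_top_of_re_inner_realMomentMap_pos {B : ι → E →ₗ[𝕜] E} {I : F →ₗ[𝕜] E}
    (hμ : ∀ y ≠ 0, 0 < re ⟪y, realMomentMap B I y⟫_𝕜) {S : Submodule 𝕜 E}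
    (hSB : ∀ a, S ∈ invtSubmodule (B a)) (hSI : range I ≤ S) : S = ⊤ := by
  have hKB (a : ι) : ∀ x ∈ Sᗮ, adjoint (B a) x ∈ Sᗮ :=
    mem_invtSubmodule_adjoint_iff.2 (by rw [Submodule.orthogonal_orthogonal]; exact hSB a)
  have hKI : ∀ y ∈ Sᗮ, adjoint I y = 0 := fun y hy => by
    rw [← mem_ker, ← orthogonal_range]
    exact Submodule.orthogonal_le hSI hy
  let β (a : ι) := (adjoint (B a)).restrict (hKB a)
  have hβ (y : Sᗮ) :
      re ⟪(y : E), realMomentMap B I y⟫_𝕜 ≤ ∑ a, (‖β a y‖ ^ 2 - ‖adjoint (β a) y‖ ^ 2) := by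
    rw [re_inner_realMomentMap, hKI y y.2, norm_zero, zero_pow two_ne_zero, add_zero]
    refine Finset.sum_le_sum fun a _ => ?_
    have hle := norm_adjoint_restrict_adjoint_le (B a) (hKB a) y
    change _ ≤ ‖adjoint (B a) y‖ ^ 2 - _
    gcongr
  let b := stdOrthonormalBasis 𝕜 Sᗮ
  have htrace : ∑ i, ∑ a, (‖β a (b i)‖ ^ 2 - ‖adjoint (β a) (b i)‖ ^ 2) = 0 := by
    rw [Finset.sum_comm]
    simp only [Finset.sum_sub_distrib, sum_norm_sq_adjoint_apply, sub_self, Finset.sum_const_zero]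
  rw [← Submodule.orthogonal_eq_bot_iff, ← Submodule.finrank_eq_zero]
  by_contra hK
  have : Nonempty (Fin (finrank 𝕜 Sᗮ)) := ⟨⟨0, Nat.pos_of_ne_zero hK⟩⟩
  refine (Finset.sum_pos (fun i _ => (hμ _ ?_).trans_le (hβ (b i))) Finset.univ_nonempty).ne' htrace
  exact (ZeroMemClass.coe_eq_zero).not.2 (b.orthonormal.ne_zero i)

end

section

variable {𝕜 E ι : Type*} [RCLike 𝕜] [NormedAddCommGroup E] [InnerProductSpace 𝕜 E]
  {p : ι → Submodule 𝕜 E}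

theorem re_inner_pos_of_forall_mem_apply_eq_smul (hp : Pairwise ((· ⟂ ·) on p))
    (htop : ⨆ i, p i = ⊤) {M : E →ₗ[𝕜] E} {c : ι → ℝ} (hc : ∀ i, 0 < c i)
    (hM : ∀ i, ∀ x ∈ p i, M x = (c i : 𝕜) • x) {y : E} (hy : y ≠ 0) :
    0 < re ⟪y, M y⟫_𝕜 := by
  obtain ⟨s, hs⟩ := Submodule.mem_iSup_iff_exists_finset.1 (htop ▸ Submodule.mem_top (x := y))
  obtain ⟨μ, rfl⟩ := (Submodule.mem_iSup_finset_iff_exists_sum p y).1 hs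
  obtain ⟨i, hi, hμi⟩ : ∃ i ∈ s, μ i ≠ 0 := by
    by_contra! h
    exact hy (Finset.sum_eq_zero fun i hi => by simp [h i hi])
  have hMμ : M (∑ i ∈ s, (μ i : E)) = ∑ i ∈ s, (((c i : 𝕜) • μ i : p i) : E) := by
    simp only [map_sum, hM _ _ (μ _).2, Submodule.coe_smul]
  have hinner := (OrthogonalFamily.of_pairwise hp).inner_sum μ (fun i => (c i : 𝕜) • μ i) s
  simp only [Submodule.coe_subtypeₗᵢ, Submodule.coe_subtype] at hinner
  rw [hMμ, hinner]
  simp only [inner_smul_right, map_sum, re_ofReal_mul, inner_self_eq_norm_sq]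
  exact Finset.sum_pos' (fun j _ => by have := hc j; positivity)
    ⟨i, hi, mul_pos (hc i) (by positivity)⟩

theorem eq_of_le_of_iSup_eq_top [FiniteDimensional 𝕜 E] {q : ι → Submodule 𝕜 E}
    (hq : Pairwise ((· ⟂ ·) on q)) (hpq : ∀ i, p i ≤ q i) (htop : ⨆ i, p i = ⊤) (i : ι) :
    p i = q i := by
  have hortho : (p i)ᗮ ⊓ q i ⟂ ⨆ j, p j := by
    refine Submodule.isOrtho_iSup_right.2 fun j => ?_
    by_cases hij : j = i
    · subst hij
      exact (Submodule.isOrtho_orthogonal_left _).mono_left inf_le_left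
    · exact ((hq (Ne.symm hij)).mono inf_le_right (hpq j))
  rw [htop, Submodule.isOrtho_top_right] at hortho
  rw [← Submodule.sup_orthogonal_inf_of_hasOrthogonalProjection (hpq i), hortho, sup_bot_eq]

end

theorem orbifold_adhm_stability_general {G : Type*} [AddCommGroup G]
    {V W : Type*}
    [NormedAddCommGroup V] [InnerProductSpace ℂ V] [FiniteDimensional ℂ V]
    [NormedAddCommGroup W] [InnerProductSpace ℂ W] [FiniteDimensional ℂ W]
    (Vsub : AddChar G ℂˣ → Submodule ℂ V) (Wsub : AddChar G ℂˣ → Submodule ℂ W)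
    (hVorth : ∀ s s' : AddChar G ℂˣ, s ≠ s' →
      ∀ x ∈ Vsub s, ∀ y ∈ Vsub s', (inner ℂ x y : ℂ) = 0)
    (hVtop : (⨆ s, Vsub s) = ⊤)
    (hWtop : (⨆ s, Wsub s) = ⊤)
    (sa : Fin 4 → AddChar G ℂˣ)
    (B : Fin 4 → V →ₗ[ℂ] V) (I : W →ₗ[ℂ] V)
    (ζ : AddChar G ℂˣ → ℝ) (hζ : ∀ s, 0 < ζ s)
    (hmom : ∀ s : AddChar G ℂˣ, ∀ x ∈ Vsub s,
      ((∑ a : Fin 4, (B a ∘ₗ LinearMap.adjoint (B a) - LinearMap.adjoint (B a) ∘ₗ B a))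
          + I ∘ₗ LinearMap.adjoint I) x = (ζ s : ℂ) • x)
    (Ssub : AddChar G ℂˣ → Submodule ℂ V)
    (hSV : ∀ s, Ssub s ≤ Vsub s)
    (hSB : ∀ (a : Fin 4) (s : AddChar G ℂˣ), ∀ x ∈ Ssub s, B a x ∈ Ssub (s * sa a))
    (hSI : ∀ s : AddChar G ℂˣ, ∀ w ∈ Wsub s, I w ∈ Ssub s) :
    ∀ s, Ssub s = Vsub s := by
  have hVortho : Pairwise ((· ⟂ ·) on Vsub) := fun s t hst =>
    Submodule.isOrtho_iff_inner_eq.2 (hVorth s t hst)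
  have hB (a : Fin 4) : ⨆ s, Ssub s ∈ invtSubmodule (B a) := by
    rw [mem_invtSubmodule_iff_map_le, Submodule.map_iSup]
    exact iSup_le fun s => (Submodule.map_le_iff_le_comap.2 (hSB a s)).trans (le_iSup _ _)
  have hI : range I ≤ ⨆ s, Ssub s := by
    rw [range_eq_map, ← hWtop, Submodule.map_iSup]
    exact iSup_mono fun s => Submodule.map_le_iff_le_comap.2 (hSI s)
  have hStop : ⨆ s, Ssub s = ⊤ := eq_top_of_re_inner_realMomentMap_pos
    (fun y hy => re_inner_pos_of_forall_mem_apply_eq_smul hVortho hVtop hζ hmom hy) hB hI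
  exact eq_of_le_of_iSup_eq_top hVortho hSV hStop

/-- Graded (orbifold) stability for `Γ`-equivariant ADHM data: let `G` be a finite abelian
group with character group `Ĝ = AddChar G ℂˣ`, let `V = ⊕_{s∈Ĝ} V_s` and `W = ⊕_{s∈Ĝ} W_s`
be orthogonal decompositions of finite-dimensional complex inner product spaces, let
`B_a : V_s → V_{s·s_a}` and `I : W_s → V_s` be graded, and suppose the graded real moment
map equations hold with Fayet–Iliopoulos parameters `ζ_s > 0`.  Then any graded subspace
`S = ⊕_s S_s` with `S_s ⊆ V_s`, invariant under all `B_a` and containing the images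
`I(W_s)`, satisfies `S_s = V_s` for every `s`. -/
theorem orbifold_adhm_stability {G : Type*} [AddCommGroup G] [Fintype G]
    {V W : Type*}
    [NormedAddCommGroup V] [InnerProductSpace ℂ V] [FiniteDimensional ℂ V]
    [NormedAddCommGroup W] [InnerProductSpace ℂ W] [FiniteDimensional ℂ W]
    (Vsub : AddChar G ℂˣ → Submodule ℂ V) (Wsub : AddChar G ℂˣ → Submodule ℂ W)
    (hVorth : ∀ s s' : AddChar G ℂˣ, s ≠ s' →
      ∀ x ∈ Vsub s, ∀ y ∈ Vsub s', (inner ℂ x y : ℂ) = 0)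
    (hVtop : (⨆ s, Vsub s) = ⊤)
    (hWorth : ∀ s s' : AddChar G ℂˣ, s ≠ s' →
      ∀ x ∈ Wsub s, ∀ y ∈ Wsub s', (inner ℂ x y : ℂ) = 0)
    (hWtop : (⨆ s, Wsub s) = ⊤)
    (sa : Fin 4 → AddChar G ℂˣ)
    (B : Fin 4 → V →ₗ[ℂ] V) (I : W →ₗ[ℂ] V)
    (hB : ∀ (a : Fin 4) (s : AddChar G ℂˣ), ∀ x ∈ Vsub s, B a x ∈ Vsub (s * sa a))
    (hI : ∀ s : AddChar G ℂˣ, ∀ w ∈ Wsub s, I w ∈ Vsub s)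
    (ζ : AddChar G ℂˣ → ℝ) (hζ : ∀ s, 0 < ζ s)
    (hmom : ∀ s : AddChar G ℂˣ, ∀ x ∈ Vsub s,
      ((∑ a : Fin 4, (B a ∘ₗ LinearMap.adjoint (B a) - LinearMap.adjoint (B a) ∘ₗ B a))
          + I ∘ₗ LinearMap.adjoint I) x = (ζ s : ℂ) • x)
    (Ssub : AddChar G ℂˣ → Submodule ℂ V)
    (hSV : ∀ s, Ssub s ≤ Vsub s)
    (hSB : ∀ (a : Fin 4) (s : AddChar G ℂˣ), ∀ x ∈ Ssub s, B a x ∈ Ssub (s * sa a))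
    (hSI : ∀ s : AddChar G ℂˣ, ∀ w ∈ Wsub s, I w ∈ Ssub s) :
    ∀ s, Ssub s = Vsub s :=
  orbifold_adhm_stability_general Vsub Wsub hVorth hVtop hWtop sa B I ζ hζ hmom Ssub hSV hSB hSI
end

section
/- Let r ≥ 2, let a_1,...,a_r ∈ ℂ be pairwise distinct, and let m'_1,...,m'_r ∈ ℂ. Define G(m') = Σ_{l=1}^r m'_l ∏_{p≠l} (1 - m'_p/(a_l - a_p)) - Σ_{l=1}^r m'_l. Then G is a polynomial in (m'_1,...,m'_r) that vanishes identically; in particular G vanishes on the diagonal m'_1 = ⋯ = m'_r = t for all t ∈ ℂ. -/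
/-!
Put `Q = ∏_p (X - a_p)` and `P = ∏_p (X - a_p - m'_p)`. Both are monic of degree `r`, so `P - Q`
has degree `< r` and its coefficient of `X^(r-1)`, which is `-Σ_p m'_p`, is recovered by Lagrange
interpolation at the nodes `a_l` as `Σ_l (P - Q)(a_l) / ∏_{p ≠ l} (a_l - a_p)`. Since `Q(a_l) = 0`
and `P(a_l) = -m'_l ∏_{p ≠ l} (a_l - a_p - m'_p)`, this is minus the first sum of `G`.
-/

open Finset Polynomial

namespace Lagrange

section Nodal

variable {R : Type*} [CommRing R] {ι : Type*} (s : Finset ι) (v w : ι → R)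

theorem degree_nodal_sub_nodal_lt [Nontrivial R] : (nodal s w - nodal s v).degree < #s :=
  (degree_sub_lt_left (by rw [degree_nodal, degree_nodal]) nodal_ne_zero
    (by rw [nodal_monic.leadingCoeff, nodal_monic.leadingCoeff])).trans_eq degree_nodal

theorem coeff_nodal_sub_nodal_card_pred {s : Finset ι} (hs : s.Nonempty) :
    (nodal s w - nodal s v).coeff (#s - 1) = ∑ i ∈ s, (v i - w i) := by
  rw [coeff_sub, nodal_eq, nodal_eq, prod_X_sub_C_coeff_card_pred _ _ hs.card_pos,
    prod_X_sub_C_coeff_card_pred _ _ hs.card_pos, sum_sub_distrib]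
  ring

theorem eval_nodal_sub_nodal_at_node [DecidableEq ι] {s : Finset ι} {i : ι} (hi : i ∈ s) :
    (nodal s w - nodal s v).eval (v i) = (v i - w i) * ∏ j ∈ s.erase i, (v i - w j) := by
  rw [eval_sub, eval_nodal_at_node hi, sub_zero, eval_nodal]
  exact (mul_prod_erase s _ hi).symm

end Nodal

theorem sum_mul_prod_one_sub_div_eq_sum {F : Type*} [Field F] {ι : Type*} [DecidableEq ι]
    {s : Finset ι} {v : ι → F} (hvs : Set.InjOn v s) (m : ι → F) :
    ∑ i ∈ s, m i * ∏ j ∈ s.erase i, (1 - m j / (v i - v j)) = ∑ i ∈ s, m i := by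
  rcases s.eq_empty_or_nonempty with rfl | hs
  · simp
  set w : ι → F := fun i => v i + m i
  have hcoeff := coeff_eq_sum hvs (degree_nodal_sub_nodal_lt s v w)
  rw [coeff_nodal_sub_nodal_card_pred v w hs] at hcoeff
  calc ∑ i ∈ s, m i * ∏ j ∈ s.erase i, (1 - m j / (v i - v j))
      = -∑ i ∈ s, (nodal s w - nodal s v).eval (v i) / ∏ j ∈ s.erase i, (v i - v j) := by
        rw [← sum_neg_distrib]
        refine sum_congr rfl fun i hi => ?_
        have hfactor : ∀ j ∈ s.erase i, 1 - m j / (v i - v j) = (v i - w j) / (v i - v j) :=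
          fun j hj => by
            have hne : v i - v j ≠ 0 := sub_ne_zero.2 <|
              hvs.ne (mem_coe.2 hi) (mem_coe.2 (mem_of_mem_erase hj)) (ne_of_mem_erase hj).symm
            field_simp
            ring
        rw [prod_congr rfl hfactor, prod_div_distrib, eval_nodal_sub_nodal_at_node v w hi]
        ring
    _ = ∑ i ∈ s, m i := by
        rw [← hcoeff, ← sum_neg_distrib]
        exact sum_congr rfl fun i _ => by ring

end Lagrange

theorem one_instanton_difference_vanishes_general {r : ℕ}
    (a : Fin r → ℂ) (ha : Function.Injective a) :
    (∀ m' : Fin r → ℂ,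
        (∑ l : Fin r, m' l * ∏ p ∈ Finset.univ.erase l, (1 - m' p / (a l - a p)))
            - ∑ l : Fin r, m' l = 0)
      ∧ ∀ t : ℂ,
        (∑ l : Fin r, t * ∏ p ∈ Finset.univ.erase l, (1 - t / (a l - a p)))
            - ∑ _l : Fin r, t = 0 := by
  have hG (m' : Fin r → ℂ) :
      (∑ l : Fin r, m' l * ∏ p ∈ Finset.univ.erase l, (1 - m' p / (a l - a p)))
        - ∑ l : Fin r, m' l = 0 :=
    sub_eq_zero.2 (Lagrange.sum_mul_prod_one_sub_div_eq_sum ha.injOn m')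
  exact ⟨hG, fun t => hG fun _ => t⟩

/-- For `r ≥ 2` and pairwise distinct `a₁,...,a_r ∈ ℂ`, the polynomial function
`G(m') = Σ_l m'_l ∏_{p≠l}(1 - m'_p/(a_l - a_p)) - Σ_l m'_l` vanishes identically;
in particular it vanishes on the diagonal `m'₁ = ⋯ = m'_r = t`. -/
theorem one_instanton_difference_vanishes {r : ℕ} (hr : 2 ≤ r)
    (a : Fin r → ℂ) (ha : Function.Injective a) :
    (∀ m' : Fin r → ℂ,
        (∑ l : Fin r, m' l * ∏ p ∈ Finset.univ.erase l, (1 - m' p / (a l - a p)))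
            - ∑ l : Fin r, m' l = 0)
      ∧ ∀ t : ℂ,
        (∑ l : Fin r, t * ∏ p ∈ Finset.univ.erase l, (1 - t / (a l - a p)))
            - ∑ _l : Fin r, t = 0 :=
  one_instanton_difference_vanishes_general a ha
end
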